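/- Let g be a Lie algebra over a field k of characteristic zero, n a nilpotent Lie subalgebra of g, ζ : n → k a character (Lie algebra homomorphism to the abelian Lie algebra k), and M a g-module. If the vector x − ζ(x) acts locally nilpotently on M for every x ∈ n, if M ≠ 0, and if M is locally finite over n (every element of M generates a finite-dimensional n-submodule), then the space of Whittaker vectors Wh(M) := { m ∈ M | x·m = ζ(x)·m for all x ∈ n } is nonzero. -/

import Mathlib

/-!
Fix `m ≠ 0` and a finite-dimensional `n`-stable subspace `S ∋ m`. Since `ζ` kills `[n, n]`, the
shifted operators `x - ζ x` form a representation of `n` on `S`, and by local nilpotency each of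
them is nilpotent. Engel's theorem then gives a nonzero vector of `S` killed by all of them, which
is a Whittaker vector.
-/

attribute [local instance 100] LieRing.ofAssociativeRing

variable {R L : Type*} [CommRing R] [LieRing L] [LieAlgebra R L]

lemma LieHom.exists_ne_zero_forall_apply_eq_zero {V : Type*} [AddCommGroup V] [Module R V]
    [IsNoetherian R V] [Nontrivial V] (ρ : L →ₗ⁅R⁆ Module.End R V)
    (hρ : ∀ x, IsNilpotent (ρ x)) : ∃ v : V, v ≠ 0 ∧ ∀ x, ρ x v = 0 := by
  have : LieModule.IsNilpotent ρ.range V := by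
    refine (LieModule.isNilpotent_iff_forall' (R := R)).mpr fun y ↦ ?_
    obtain ⟨_, x, rfl⟩ := y
    exact hρ x
  have := LieModule.nontrivial_max_triv_of_isNilpotent R ρ.range V
  obtain ⟨⟨v, hv⟩, hv₀⟩ := exists_ne (0 : LieModule.maxTrivSubmodule R ρ.range V)
  refine ⟨v, by simpa using hv₀, fun x ↦ ?_⟩
  exact (LieModule.mem_maxTrivSubmodule R ρ.range V v).mp hv ⟨ρ x, x, rfl⟩

namespace LieModule

variable (M : Type*) [AddCommGroup M] [Module R M] [LieRingModule L M] [LieModule R L M]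

def shiftedToEnd (χ : L →ₗ⁅R⁆ R) : L →ₗ⁅R⁆ Module.End R M where
  toFun x := toEnd R L M x - χ x • 1
  map_add' x y := by simp only [map_add, add_smul]; abel
  map_smul' t x := by simp [smul_sub, mul_smul]
  map_lie' {x y} := by
    have hχ : χ ⁅x, y⁆ = 0 := by rw [LieHom.map_lie, Ring.lie_def, mul_comm, sub_self]
    simp [hχ, (Commute.one_left (toEnd R L M y)).lie_eq,
      (Commute.one_right (toEnd R L M x)).lie_eq]

@[simp]
lemma shiftedToEnd_apply (χ : L →ₗ⁅R⁆ R) (x : L) (m : M) :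
    shiftedToEnd M χ x m = ⁅x, m⁆ - χ x • m :=
  rfl

variable {M}

lemma exists_forall_lie_eq_smul_of_locallyNilpotent [IsNoetherian R M] [Nontrivial M]
    (χ : L →ₗ⁅R⁆ R)
    (hχ : ∀ (x : L) (m : M), ∃ N : ℕ, (fun m' ↦ ⁅x, m'⁆ - χ x • m')^[N] m = 0) :
    ∃ m : M, m ≠ 0 ∧ ∀ x : L, ⁅x, m⁆ = χ x • m := by
  have hnil (x : L) : _root_.IsNilpotent (shiftedToEnd M χ x) :=
    Module.End.isNilpotent_iff_of_finite.mpr fun m ↦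
      (hχ x m).imp fun N hN ↦ by rw [Module.End.pow_apply]; exact hN
  obtain ⟨m, hm, hχm⟩ := (shiftedToEnd M χ).exists_ne_zero_forall_apply_eq_zero hnil
  exact ⟨m, hm, fun x ↦ sub_eq_zero.mp (by simpa using hχm x)⟩

end LieModule

theorem stmt2_general (k : Type) [Field k] (g : Type) [LieRing g] [LieAlgebra k g]
    (n : LieSubalgebra k g) (ζ : n →ₗ⁅k⁆ k)
    (M : Type) [AddCommGroup M] [Module k M] [LieRingModule g M] [LieModule k g M]
    (hlocnil : ∀ (x : n) (m : M), ∃ N : ℕ, (fun m' => ⁅(x : g), m'⁆ - ζ x • m')^[N] m = 0)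
    (hnonzero : ∃ m : M, m ≠ 0)
    (hlocfin : ∀ m : M, ∃ S : Submodule k M, m ∈ S ∧ FiniteDimensional k S ∧
      ∀ (x : n), ∀ s ∈ S, ⁅(x : g), s⁆ ∈ S) :
    ∃ m : M, m ≠ 0 ∧ ∀ x : n, ⁅(x : g), m⁆ = ζ x • m := by
  obtain ⟨m, hm⟩ := hnonzero
  obtain ⟨S, hmS, hfin, hstab⟩ := hlocfin m
  let N : LieSubmodule k n M := { S with lie_mem := fun {x s} hs ↦ hstab x s hs }
  have : Nontrivial N := nontrivial_of_ne ⟨m, hmS⟩ 0 fun h ↦ hm (congrArg Subtype.val h)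
  have : FiniteDimensional k N := hfin
  have hζN (x : n) (s : N) :
      ∃ K : ℕ, (fun s' ↦ ⁅x, s'⁆ - ζ x • s')^[K] s = 0 := by
    have hval : Function.Semiconj (Subtype.val : N → M) (fun s' ↦ ⁅x, s'⁆ - ζ x • s')
        (fun m' ↦ ⁅(x : g), m'⁆ - ζ x • m') := fun _ ↦ rfl
    obtain ⟨K, hK⟩ := hlocnil x s
    exact ⟨K, Subtype.val_injective ((hval.iterate_right K).eq s ▸ hK)⟩
  obtain ⟨⟨v, _⟩, hv, hζv⟩ :=
    LieModule.exists_forall_lie_eq_smul_of_locallyNilpotent ζ hζN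
  exact ⟨v, by simpa using hv, fun x ↦ congrArg Subtype.val (hζv x)⟩

/-- Let `g` be a Lie algebra over a field `k` of characteristic zero, `n` a nilpotent Lie
subalgebra, `ζ : n → k` a character, and `M` a nonzero `g`-module on which each `x − ζ(x)`
(`x ∈ n`) acts locally nilpotently and which is locally finite over `n`.  Then the space of
Whittaker vectors `Wh(M) = { m | x·m = ζ(x)·m  ∀ x ∈ n }` is nonzero. -/
theorem stmt2 (k : Type) [Field k] [CharZero k] (g : Type) [LieRing g] [LieAlgebra k g]
    (n : LieSubalgebra k g) [LieRing.IsNilpotent n] (ζ : n →ₗ⁅k⁆ k)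
    (M : Type) [AddCommGroup M] [Module k M] [LieRingModule g M] [LieModule k g M]
    (hlocnil : ∀ (x : n) (m : M), ∃ N : ℕ, (fun m' => ⁅(x : g), m'⁆ - ζ x • m')^[N] m = 0)
    (hnonzero : ∃ m : M, m ≠ 0)
    (hlocfin : ∀ m : M, ∃ S : Submodule k M, m ∈ S ∧ FiniteDimensional k S ∧
      ∀ (x : n), ∀ s ∈ S, ⁅(x : g), s⁆ ∈ S) :
    ∃ m : M, m ≠ 0 ∧ ∀ x : n, ⁅(x : g), m⁆ = ζ x • m :=
  stmt2_general k g n ζ M hlocnil hnonzero hlocfin
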